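/- Let A be a commutative ℚ-algebra and let f, g ∈ A⟦t⟧ be formal power series with zero constant term, and let h ∈ A⟦t⟧ be the formal substitution of g into f (h(t) = f(g(t))). Writing f_n := n! · (coefficient of t^n in f), and similarly g_n and h_n, one has for every n ≥ 1: h_n = Σ_{k=1}^{n} f_k · B_{n,k}(g_1, g_2, …, g_{n−k+1}), where B_{n,k}(g_1, g_2, …) denotes the commutative partial Bell polynomial evaluated at d_i := g_i. -/

import Mathlib

open Finset MvPolynomial

/-- The (commutative) partial Bell polynomials. -/
noncomputable def pBell {A : Type*} [Ring A] (d : ℕ → A) : ℕ → ℕ → A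
  | 0, 0 => 1
  | _ + 1, 0 => 0
  | 0, _ + 1 => 0
  | n + 1, k + 1 =>
      ∑ j ∈ Finset.range (n + 1), (n.choose j : A) * (pBell d (n - j) k * d (j + 1))
  termination_by _ k => k

/-!
Writing `G` for the sequence `i ↦ i! · coeff i g`, the heart of the matter is the identity
`n! · coeff n (g ^ k) = k! · B_{n,k}(G)`, i.e. `B_{n,k}(G)` is the `n`-th exponential coefficient
of `g ^ k / k!`. It follows by induction on `k`: the derivative of `g ^ (k + 1)` is
`(k + 1) · g' · g ^ k`, and in exponential coefficients differentiation is a shift and the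
product of series is the binomial convolution, which is exactly the recursion defining
`B_{n+1,k+1}`. Substituting this into `h = ∑ₖ coeff k f · g ^ k` gives the theorem.
-/

open scoped Nat

section pBell

variable {A : Type*} [Ring A] (d : ℕ → A)

@[simp]
lemma pBell_zero_zero : pBell d 0 0 = 1 := by
  rw [pBell]

@[simp]
lemma pBell_succ_zero (n : ℕ) : pBell d (n + 1) 0 = 0 := by
  rw [pBell]

@[simp]
lemma pBell_zero_succ (k : ℕ) : pBell d 0 (k + 1) = 0 := by
  rw [pBell]

lemma pBell_succ_succ (n k : ℕ) :
    pBell d (n + 1) (k + 1) =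
      ∑ j ∈ range (n + 1), (n.choose j : A) * (pBell d (n - j) k * d (j + 1)) := by
  rw [pBell]

lemma map_pBell {B F : Type*} [Ring B] [FunLike F A B] [RingHomClass F A B] (ψ : F)
    (n k : ℕ) : ψ (pBell d n k) = pBell (fun i => ψ (d i)) n k := by
  induction k generalizing n with
  | zero => cases n <;> simp
  | succ k ih =>
    cases n with
    | zero => simp
    | succ n =>
      simp only [pBell_succ_succ, map_sum, map_mul, map_natCast, ih]

end pBell

lemma aeval_pBell_X {R S : Type*} [CommRing R] [CommRing S] [Algebra R S] (d : ℕ → S)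
    (n k : ℕ) : aeval d (pBell (fun i => (X i : MvPolynomial ℕ R)) n k) = pBell d n k := by
  simpa using map_pBell (fun i => (X i : MvPolynomial ℕ R)) (aeval d) n k

namespace PowerSeries

section CommSemiring

variable {R : Type*} [CommSemiring R]

theorem factorial_mul_coeff_succ (p : R⟦X⟧) (n : ℕ) :
    ((n + 1)! : R) * coeff (n + 1) p = n ! * coeff n (d⁄dX R p) := by
  rw [coeff_derivative, Nat.factorial_succ]
  push_cast
  ring

theorem factorial_mul_coeff_mul (p q : R⟦X⟧) (n : ℕ) :
    (n ! : R) * coeff n (p * q) =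
      ∑ j ∈ range (n + 1),
        (n.choose j : R) * ((j ! * coeff j p) * ((n - j)! * coeff (n - j) q)) := by
  rw [coeff_mul, Nat.sum_antidiagonal_eq_sum_range_succ_mk, mul_sum]
  refine sum_congr rfl fun j hj => ?_
  rw [← Nat.choose_mul_factorial_mul_factorial (mem_range_succ_iff.mp hj)]
  push_cast
  ring

end CommSemiring

theorem factorial_mul_coeff_pow {R : Type*} [CommRing R] (g : R⟦X⟧)
    (hg : constantCoeff g = 0) (k n : ℕ) :
    (n ! : R) * coeff n (g ^ k) = k ! * pBell (fun i => (i ! : R) * coeff i g) n k := by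
  set G : ℕ → R := fun i => (i ! : R) * coeff i g
  induction k generalizing n with
  | zero => cases n <;> simp [coeff_one]
  | succ k ih =>
    cases n with
    | zero => simp [hg]
    | succ n =>
      calc ((n + 1)! : R) * coeff (n + 1) (g ^ (k + 1))
          = (k + 1) * ((n ! : R) * coeff n (d⁄dX R g * g ^ k)) := by
            rw [factorial_mul_coeff_succ, derivative_pow, Nat.add_sub_cancel, mul_assoc,
              mul_comm (g ^ k), ← map_natCast (C (R := R)), coeff_C_mul]
            push_cast
            ring
        _ = (k + 1) * ∑ j ∈ range (n + 1),
              (n.choose j : R) * (G (j + 1) * (k ! * pBell G (n - j) k)) := by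
            simp only [factorial_mul_coeff_mul, ← factorial_mul_coeff_succ, ih, G]
        _ = (k + 1)! * pBell G (n + 1) (k + 1) := by
            rw [pBell_succ_succ, mul_sum, mul_sum, Nat.factorial_succ]
            refine sum_congr rfl fun j _ => ?_
            push_cast
            ring

end PowerSeries

theorem stmt15_general {A : Type*} [CommRing A] [Algebra ℚ A]
    (f g h : PowerSeries A)
    (hg0 : PowerSeries.constantCoeff g = 0)
    (hh : ∀ m : ℕ, PowerSeries.coeff m h =
      ∑ k ∈ Finset.range (m + 1),
        PowerSeries.coeff k f * PowerSeries.coeff m (g ^ k)) :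
    ∀ n : ℕ, 1 ≤ n →
      (n.factorial : A) * PowerSeries.coeff n h =
        ∑ k ∈ Finset.Icc 1 n,
          ((k.factorial : A) * PowerSeries.coeff k f) *
            MvPolynomial.aeval (fun i => (i.factorial : A) * PowerSeries.coeff i g)
              (pBell (fun i => (X i : MvPolynomial ℕ ℚ)) n k) := by
  intro n hn
  have hterm (k : ℕ) : (n ! : A) * (PowerSeries.coeff k f * PowerSeries.coeff n (g ^ k)) =
      ((k ! : A) * PowerSeries.coeff k f) *
        pBell (fun i => (i ! : A) * PowerSeries.coeff i g) n k := by
    rw [mul_left_comm, PowerSeries.factorial_mul_coeff_pow g hg0]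
    ring
  obtain ⟨m, rfl⟩ := Nat.exists_eq_add_of_le' hn
  rw [hh, mul_sum, range_eq_Ico, sum_eq_sum_Ico_succ_bot (Nat.succ_pos _), zero_add,
    Nat.succ_eq_add_one, Ico_add_one_right_eq_Icc]
  simp only [aeval_pBell_X, hterm, pBell_succ_zero, mul_zero, zero_add]

/-- Faà di Bruno for formal power series: if `f, g` have zero constant term and `h` is the
formal substitution of `g` into `f` (i.e. `coeff m h = ∑_{k ≤ m} coeff k f · coeff m (g^k)`),
then, writing `f_n = n!·coeff n f` etc., `h_n = ∑_{k=1}^{n} f_k · B_{n,k}(g_1, g_2, …)`. -/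
theorem stmt15 {A : Type*} [CommRing A] [Algebra ℚ A]
    (f g h : PowerSeries A)
    (hf0 : PowerSeries.constantCoeff f = 0)
    (hg0 : PowerSeries.constantCoeff g = 0)
    (hh : ∀ m : ℕ, PowerSeries.coeff m h =
      ∑ k ∈ Finset.range (m + 1),
        PowerSeries.coeff k f * PowerSeries.coeff m (g ^ k)) :
    ∀ n : ℕ, 1 ≤ n →
      (n.factorial : A) * PowerSeries.coeff n h =
        ∑ k ∈ Finset.Icc 1 n,
          ((k.factorial : A) * PowerSeries.coeff k f) *
            MvPolynomial.aeval (fun i => (i.factorial : A) * PowerSeries.coeff i g)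
              (pBell (fun i => (X i : MvPolynomial ℕ ℚ)) n k) :=
  stmt15_general f g h hg0 hh
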